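/- For a continuous function Ψ₀ on [a,b], the function h₂(x,y) = 2·sup_{z∈[x∧y, x∨y]} Ψ₀(z) − Ψ₀(x) − Ψ₀(y) is a pseudometric on [a,b] satisfying the four-point condition h₂(w,x) + h₂(y,z) ≤ max{h₂(w,y) + h₂(x,z), h₂(x,y) + h₂(w,z)}; hence the quotient metric space is 0-hyperbolic (a real tree). -/
import Mathlib


open Real

/-- `h₂(x,y) = 2·sup_{z ∈ [x∧y, x∨y]} Ψ(z) − Ψ(x) − Ψ(y)`, the 'tree in a continuous
path' pseudometric associated with a continuous function `Ψ`. -/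
noncomputable def h2 (Ψ : ℝ → ℝ) (x y : ℝ) : ℝ :=
  2 * sSup (Ψ '' Set.Icc (min x y) (max x y)) - Ψ x - Ψ y

/-- Auxiliary: the sup of `Ψ` on the interval between `x` and `y`. -/
noncomputable def mfun (Ψ : ℝ → ℝ) (x y : ℝ) : ℝ :=
  sSup (Ψ '' Set.Icc (min x y) (max x y))

lemma h2_eq (Ψ : ℝ → ℝ) (x y : ℝ) : h2 Ψ x y = 2 * mfun Ψ x y - Ψ x - Ψ y := rfl

section aux

variable {Ψ : ℝ → ℝ} {a b : ℝ}

lemma icc_sub {x y : ℝ} (hx : x ∈ Set.Icc a b) (hy : y ∈ Set.Icc a b) :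
    Set.Icc (min x y) (max x y) ⊆ Set.Icc a b :=
  Set.Icc_subset_Icc (le_min hx.1 hy.1) (max_le hx.2 hy.2)

lemma bdd_img (hcont : ContinuousOn Ψ (Set.Icc a b)) {x y : ℝ}
    (hx : x ∈ Set.Icc a b) (hy : y ∈ Set.Icc a b) :
    BddAbove (Ψ '' Set.Icc (min x y) (max x y)) :=
  (isCompact_Icc.image_of_continuousOn (hcont.mono (icc_sub hx hy))).bddAbove

lemma left_le_mfun (hcont : ContinuousOn Ψ (Set.Icc a b)) {x y : ℝ}
    (hx : x ∈ Set.Icc a b) (hy : y ∈ Set.Icc a b) : Ψ x ≤ mfun Ψ x y :=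
  le_csSup (bdd_img hcont hx hy) ⟨x, ⟨min_le_left x y, le_max_left x y⟩, rfl⟩

lemma right_le_mfun (hcont : ContinuousOn Ψ (Set.Icc a b)) {x y : ℝ}
    (hx : x ∈ Set.Icc a b) (hy : y ∈ Set.Icc a b) : Ψ y ≤ mfun Ψ x y :=
  le_csSup (bdd_img hcont hx hy) ⟨y, ⟨min_le_right x y, le_max_right x y⟩, rfl⟩

lemma mfun_self (x : ℝ) : mfun Ψ x x = Ψ x := by
  simp [mfun]

lemma mfun_comm (x y : ℝ) : mfun Ψ x y = mfun Ψ y x := by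
  rw [mfun, mfun, min_comm, max_comm]

/-- Interval covering: anything between `x` and `z` is between `x` and `y` or
between `y` and `z`. -/
lemma cover {x y z t : ℝ} (h1 : min x z ≤ t) (h2 : t ≤ max x z) :
    (min x y ≤ t ∧ t ≤ max x y) ∨ (min y z ≤ t ∧ t ≤ max y z) := by
  have h3 := le_total t y
  simp only [min_le_iff, le_max_iff] at *
  tauto

/-- The ultrametric-type inequality for `mfun`. -/
lemma mfun_ultra (hcont : ContinuousOn Ψ (Set.Icc a b)) {x y z : ℝ}
    (hx : x ∈ Set.Icc a b) (hy : y ∈ Set.Icc a b) (hz : z ∈ Set.Icc a b) :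
    mfun Ψ x z ≤ max (mfun Ψ x y) (mfun Ψ y z) := by
  apply csSup_le ((Set.nonempty_Icc.2 min_le_max).image Ψ)
  rintro v ⟨t, ht, rfl⟩
  rcases cover (y := y) ht.1 ht.2 with h | h
  · exact le_max_of_le_left (le_csSup (bdd_img hcont hx hy) ⟨t, h, rfl⟩)
  · exact le_max_of_le_right (le_csSup (bdd_img hcont hy hz) ⟨t, h, rfl⟩)

/-- Abstract four-point argument, case `wx ≤ wy`. -/
lemma key {wx wy wz xy xz yz : ℝ}
    (h1 : yz ≤ max xy xz) (h2 : wx ≤ max wz xz) (h3 : xz ≤ max wx wz)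
    (h4 : yz ≤ max wy wz) (h0 : wx ≤ wy) :
    wx + yz ≤ max (wy + xz) (xy + wz) := by
  by_contra hc
  push_neg at hc
  rw [max_lt_iff] at hc
  obtain ⟨hB, hC⟩ := hc
  have hxz_lt : xz < yz := by linarith
  have hyz_xy : yz ≤ xy := (le_max_iff.mp h1).resolve_right (not_le.mpr hxz_lt)
  have hwz_lt : wz < wx := by linarith
  have hwx_xz : wx ≤ xz := (le_max_iff.mp h2).resolve_left (not_le.mpr hwz_lt)
  have hxz_wx : xz ≤ wx :=
    (le_max_iff.mp h3).resolve_right (not_le.mpr (lt_of_lt_of_le hwz_lt hwx_xz))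
  have hwy_lt : wy < yz := by linarith
  have : yz ≤ wz := (le_max_iff.mp h4).resolve_left (not_le.mpr hwy_lt)
  linarith

end aux

/-- For a continuous function `Ψ₀` on `[a,b]`, the function
`h₂(x,y) = 2·max_{z between x and y} Ψ₀(z) − Ψ₀(x) − Ψ₀(y)` is a pseudometric on `[a,b]`
(vanishing on the diagonal, nonnegative, symmetric, triangle inequality) satisfying the
four-point condition
`h₂(w,x) + h₂(y,z) ≤ max{h₂(w,y) + h₂(x,z), h₂(x,y) + h₂(w,z)}`;
hence the quotient metric space is 0-hyperbolic (a real tree). -/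
theorem h2_pseudometric_four_point (Ψ : ℝ → ℝ) (a b : ℝ) (hab : a ≤ b)
    (hcont : ContinuousOn Ψ (Set.Icc a b)) :
    (∀ x ∈ Set.Icc a b, h2 Ψ x x = 0)
    ∧ (∀ x ∈ Set.Icc a b, ∀ y ∈ Set.Icc a b, 0 ≤ h2 Ψ x y)
    ∧ (∀ x ∈ Set.Icc a b, ∀ y ∈ Set.Icc a b, h2 Ψ x y = h2 Ψ y x)
    ∧ (∀ x ∈ Set.Icc a b, ∀ y ∈ Set.Icc a b, ∀ z ∈ Set.Icc a b,
        h2 Ψ x z ≤ h2 Ψ x y + h2 Ψ y z)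
    ∧ (∀ w ∈ Set.Icc a b, ∀ x ∈ Set.Icc a b, ∀ y ∈ Set.Icc a b, ∀ z ∈ Set.Icc a b,
        h2 Ψ w x + h2 Ψ y z ≤ max (h2 Ψ w y + h2 Ψ x z) (h2 Ψ x y + h2 Ψ w z)) := by
  refine ⟨?_, ?_, ?_, ?_, ?_⟩
  · intro x hx
    rw [h2_eq, mfun_self]; ring
  · intro x hx y hy
    have h1 := left_le_mfun hcont hx hy
    have h2 := right_le_mfun hcont hx hy
    rw [h2_eq]; linarith
  · intro x hx y hy
    rw [h2_eq, h2_eq, mfun_comm]; ring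
  · intro x hx y hy z hz
    have h1 := mfun_ultra hcont hx hy hz
    have h2 := right_le_mfun hcont hx hy
    have h3 := left_le_mfun hcont hy hz
    rw [h2_eq, h2_eq, h2_eq]
    rcases max_cases (mfun Ψ x y) (mfun Ψ y z) with ⟨he, _⟩ | ⟨he, _⟩ <;>
      rw [he] at h1 <;> linarith
  · intro w hw x hx y hy z hz
    simp only [h2_eq]
    have u1 : mfun Ψ y z ≤ max (mfun Ψ x y) (mfun Ψ x z) := by
      have := mfun_ultra hcont hy hx hz; rwa [mfun_comm y x] at this
    have u2 : mfun Ψ w x ≤ max (mfun Ψ w z) (mfun Ψ x z) := by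
      have := mfun_ultra hcont hw hz hx; rwa [mfun_comm z x] at this
    have u3 : mfun Ψ x z ≤ max (mfun Ψ w x) (mfun Ψ w z) := by
      have := mfun_ultra hcont hx hw hz; rwa [mfun_comm x w] at this
    have u4 : mfun Ψ y z ≤ max (mfun Ψ w y) (mfun Ψ w z) := by
      have := mfun_ultra hcont hy hw hz; rwa [mfun_comm y w] at this
    have u5 : mfun Ψ w z ≤ max (mfun Ψ w x) (mfun Ψ x z) := mfun_ultra hcont hw hx hz
    have u0 : mfun Ψ w x ≤ max (mfun Ψ w y) (mfun Ψ x y) := by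
      have := mfun_ultra hcont hw hy hx; rwa [mfun_comm y x] at this
    have hmain : mfun Ψ w x + mfun Ψ y z ≤
        max (mfun Ψ w y + mfun Ψ x z) (mfun Ψ x y + mfun Ψ w z) := by
      rcases le_max_iff.mp u0 with h0 | h0
      · exact key u1 u2 u3 u4 h0
      · rw [max_comm]
        have u2' : mfun Ψ w x ≤ max (mfun Ψ x z) (mfun Ψ w z) := by
          rwa [max_comm] at u2
        exact key u4 u2' u5 u1 h0
    rcases le_max_iff.mp hmain with h | h
    · exact le_max_of_le_left (by linarith)
    · exact le_max_of_le_right (by linarith)
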